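/- Let K be a field, n > 1, and a ∈ K[s]^n a nonzero row vector. Suppose u_1,...,u_{n-1} are nonzero elements of syz(a) that generate syz(a) as a K[s]-module and whose leading vectors LV(u_1),...,LV(u_{n-1}) are linearly independent over K. Then for every h ∈ syz(a) there exist g_1,...,g_{n-1} ∈ K[s] with deg(g_i) ≤ deg(h) − deg(u_i) for each i (in particular g_i = 0 whenever deg(u_i) > deg(h)) such that h = Σ_{i=1}^{n-1} g_i u_i. -/

import Mathlib

open Polynomial
open scoped Classical

noncomputable section

/-- The degree of a polynomial vector: the maximum of the degrees of the entries. -/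
def vdeg {K : Type*} [Field K] {n : ℕ} (h : Fin n → K[X]) : ℕ :=
  Finset.univ.sup fun i => (h i).natDegree

/-- The leading vector of a polynomial vector: the vector of coefficients of
`s ^ (vdeg h)` in the entries. -/
def LV {K : Type*} [Field K] {n : ℕ} (h : Fin n → K[X]) : Fin n → K :=
  fun i => (h i).coeff (vdeg h)

/-- The syzygy module of a row vector `a` of polynomials. -/
def syz {K : Type*} [Field K] {n : ℕ} (a : Fin n → K[X]) :
    Submodule K[X] (Fin n → K[X]) where
  carrier := {h | ∑ i, a i * h i = 0}
  add_mem' := by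
    intro x y hx hy
    simp only [Set.mem_setOf_eq] at *
    simp only [Pi.add_apply, mul_add, Finset.sum_add_distrib, hx, hy, add_zero]
  zero_mem' := by simp
  smul_mem' := by
    intro c x hx
    simp only [Set.mem_setOf_eq] at *
    have h1 : ∑ i, a i * (c • x) i = c * ∑ i, a i * x i := by
      rw [Finset.mul_sum]
      refine Finset.sum_congr rfl fun i _ => ?_
      simp only [Pi.smul_apply, smul_eq_mul]
      ring
    rw [h1, hx, mul_zero]

/-- The coefficient matrix `A ∈ K^{(2d+1) × n(d+1)}` associated with a polynomial row
vector `a` of degree at most `d`:  `A_{k+1, i+jn} = c_{k-j,i}` where `c_m` is the vector of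
coefficients of `s^m` in `a` (with `c_m = 0` for `m < 0` or `m > d`). -/
def coefA {K : Type*} [Field K] {n : ℕ} (d : ℕ) (hn : 0 < n) (a : Fin n → K[X]) :
    Matrix (Fin (2*d+1)) (Fin (n*(d+1))) K :=
  Matrix.of fun k ℓ =>
    if (ℓ : ℕ) / n ≤ (k : ℕ) then
      (a ⟨(ℓ : ℕ) % n, Nat.mod_lt _ hn⟩).coeff ((k : ℕ) - (ℓ : ℕ) / n)
    else 0

/-- The `♭` isomorphism `K^{n(d+1)} → K[s]^n`: split `v` into `d+1` consecutive blocks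
`w_0, …, w_d ∈ K^n` and form `∑_j s^j w_j`. -/
def flatv {K : Type*} [Field K] {n : ℕ} (d : ℕ) (v : Fin (n*(d+1)) → K) : Fin n → K[X] :=
  fun i => ∑ j : Fin (d+1), C (v ⟨(i:ℕ) + (j:ℕ)*n, by
    calc (i:ℕ) + (j:ℕ)*n < n + (j:ℕ)*n := Nat.add_lt_add_right i.isLt _
      _ = n * ((j:ℕ)+1) := by ring
      _ ≤ n * (d+1) := Nat.mul_le_mul le_rfl j.isLt⟩) * X ^ (j:ℕ)

/-- The `♭` isomorphism `K^m → K[s]` for scalars. -/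
def flat1 {K : Type*} [Field K] {m : ℕ} (w : Fin m → K) : K[X] :=
  ∑ k : Fin m, C (w k) * X ^ (k:ℕ)

/-- A column index `j` of a matrix is pivotal if the `j`-th column is not a `K`-linear
combination of the columns of smaller index. -/
def Pivotal {K : Type*} [Field K] {m N : ℕ} (A : Matrix (Fin m) (Fin N) K) (j : Fin N) : Prop :=
  (fun k => A k j) ∉ Submodule.span K ((fun r : Fin N => fun k => A k r) '' {r | r < j})

/-- A basic non-pivotal index: the minimal non-pivotal index in its residue class modulo `n`. -/
def BasicNP {K : Type*} [Field K] {m N : ℕ} (n : ℕ) (A : Matrix (Fin m) (Fin N) K)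
    (r : Fin N) : Prop :=
  ¬ Pivotal A r ∧ ∀ r' : Fin N, ¬ Pivotal A r' → (r':ℕ) % n = (r:ℕ) % n → r ≤ r'

/-- `B` encodes, for each non-pivotal index `i`, the row-echelon null vector
`b_i = e_i − v_i`: `(b_i)_i = 1`, `(b_i)_j = −α_j` for pivotal `j < i` where
`A_{*i} = Σ α_j A_{*j}`, and all other entries vanish.  Equivalently, `b_i ∈ ker A`,
`(b_i)_i = 1` and `(b_i)_j = 0` unless `j = i` or `j` is pivotal with `j < i`. -/
def IsEchelonNull {K : Type*} [Field K] {m N : ℕ} (A : Matrix (Fin m) (Fin N) K)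
    (B : Fin N → Fin N → K) : Prop :=
  ∀ i : Fin N, ¬ Pivotal A i →
    A.mulVec (B i) = 0 ∧ B i i = 1 ∧
    ∀ j : Fin N, j ≠ i → ¬ (Pivotal A j ∧ j < i) → B i j = 0

/-- Shift an index by `t`, modulo the size (used only when `j + t` is in range). -/
def shiftIdx {N : ℕ} (j : Fin N) (t : ℕ) : Fin N :=
  ⟨((j:ℕ) + t) % N, Nat.mod_lt _ j.pos⟩

/-! If `h = ∑ gᵢ uᵢ` and some term has degree `deg gᵢ + deg uᵢ > deg h`, let `D` be the largest
such degree. The coefficient of `s ^ D` in `h` vanishes, and it equals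
`∑ lc(gᵢ) LV(uᵢ)` over the indices attaining `D`; linear independence of the leading vectors
forces these `lc(gᵢ)` to vanish, which is absurd. Hence any representation of `h` in terms of
the generators `uᵢ` already satisfies the degree bounds. -/

section PredictableDegree

variable {K : Type*} [Field K] {n : ℕ}

lemma natDegree_le_vdeg (h : Fin n → K[X]) (j : Fin n) : (h j).natDegree ≤ vdeg h :=
  Finset.le_sup (f := fun i => (h i).natDegree) (Finset.mem_univ j)

lemma coeff_eq_zero_of_vdeg_lt {h : Fin n → K[X]} {D : ℕ} (hD : vdeg h < D) (j : Fin n) :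
    (h j).coeff D = 0 :=
  coeff_eq_zero_of_natDegree_lt ((natDegree_le_vdeg h j).trans_lt hD)

lemma coeff_smul_apply_of_natDegree_add_vdeg_le {g : K[X]} {v : Fin n → K[X]} {D : ℕ}
    (hD : g ≠ 0 → g.natDegree + vdeg v ≤ D) (j : Fin n) :
    ((g • v) j).coeff D = (if g.natDegree + vdeg v = D then g.leadingCoeff else 0) * LV v j := by
  rcases eq_or_ne g 0 with rfl | hg
  · simp
  rw [Pi.smul_apply, smul_eq_mul]
  split_ifs with hDeq
  · subst hDeq
    exact coeff_mul_add_eq_of_natDegree_le le_rfl (natDegree_le_vdeg v j)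
  · rw [zero_mul]
    refine coeff_eq_zero_of_natDegree_lt (natDegree_mul_le.trans_lt ?_)
    exact (Nat.add_le_add_left (natDegree_le_vdeg v j) _).trans_lt
      ((hD hg).lt_of_ne hDeq)

/-- The predictable degree property. -/
theorem natDegree_add_vdeg_le_vdeg_sum_smul {ι : Type*} [Fintype ι] {u : ι → Fin n → K[X]}
    (hLV : LinearIndependent K fun i => LV (u i)) (g : ι → K[X]) {i₀ : ι} (hi₀ : g i₀ ≠ 0) :
    (g i₀).natDegree + vdeg (u i₀) ≤ vdeg (∑ i, g i • u i) := by
  by_contra! hlt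
  set deg : ι → ℕ := fun i => (g i).natDegree + vdeg (u i)
  set supp := Finset.univ.filter fun i => g i ≠ 0
  have hi₀supp : i₀ ∈ supp := Finset.mem_filter.mpr ⟨Finset.mem_univ _, hi₀⟩
  obtain ⟨iₘ, hiₘsupp, hiₘD⟩ := Finset.exists_mem_eq_sup supp ⟨i₀, hi₀supp⟩ deg
  set D := supp.sup deg
  have hdeg_le : ∀ i, g i ≠ 0 → deg i ≤ D := fun i hi =>
    Finset.le_sup (Finset.mem_filter.mpr ⟨Finset.mem_univ _, hi⟩)
  set c : ι → K := fun i => if deg i = D then (g i).leadingCoeff else 0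
  have htop : ∑ i, c i • LV (u i) = 0 := by
    funext j
    have hcoeff := coeff_eq_zero_of_vdeg_lt (hlt.trans_le (hdeg_le i₀ hi₀)) j
    simp only [Finset.sum_apply, finsetSum_coeff,
      fun i => coeff_smul_apply_of_natDegree_add_vdeg_le (hdeg_le i) j] at hcoeff
    simpa only [Finset.sum_apply, Pi.smul_apply, Pi.zero_apply, smul_eq_mul] using hcoeff
  have hcₘ : c iₘ = 0 := Fintype.linearIndependent_iff.mp hLV c htop iₘ
  simp only [c, hiₘD.symm, if_true, leadingCoeff_eq_zero] at hcₘ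
  exact (Finset.mem_filter.mp hiₘsupp).2 hcₘ

end PredictableDegree

theorem mu_basis_reduced_representation_general {K : Type*} [Field K] {n : ℕ}
    (a : Fin n → K[X])
    (u : Fin (n-1) → Fin n → K[X])
    (huspan : Submodule.span K[X] (Set.range u) = syz a)
    (hLV : LinearIndependent K fun i => LV (u i)) :
    ∀ h ∈ syz a, ∃ g : Fin (n-1) → K[X],
      (∀ i, g i = 0 ∨ (g i).natDegree + vdeg (u i) ≤ vdeg h) ∧
      h = ∑ i, g i • u i := by
  intro h hh
  rw [← huspan, Submodule.mem_span_range_iff_exists_fun] at hh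
  obtain ⟨g, rfl⟩ := hh
  refine ⟨g, fun i => ?_, rfl⟩
  rw [or_iff_not_imp_left]
  exact natDegree_add_vdeg_le_vdeg_sum_smul hLV g

/-- reduced representation.  If `u_1, …, u_{n-1}` are nonzero syzygies
that generate `syz a` and whose leading vectors are `K`-linearly independent, then every
`h ∈ syz a` can be written `h = Σ g_i u_i` with `deg g_i ≤ deg h − deg u_i`
(in particular `g_i = 0` whenever `deg u_i > deg h`). -/
theorem mu_basis_reduced_representation {K : Type*} [Field K] {n : ℕ} (hn : 1 < n)
    (a : Fin n → K[X]) (ha : a ≠ 0)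
    (u : Fin (n-1) → Fin n → K[X]) (hu0 : ∀ i, u i ≠ 0)
    (humem : ∀ i, u i ∈ syz a)
    (huspan : Submodule.span K[X] (Set.range u) = syz a)
    (hLV : LinearIndependent K fun i => LV (u i)) :
    ∀ h ∈ syz a, ∃ g : Fin (n-1) → K[X],
      (∀ i, g i = 0 ∨ (g i).natDegree + vdeg (u i) ≤ vdeg h) ∧
      h = ∑ i, g i • u i :=
  mu_basis_reduced_representation_general a u huspan hLV
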